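/- arXiv:2511.01032 — 4 statements merged into one kernel-verified Lean document; each statement's English description precedes it below -/
import Mathlib

section
/- Let ε ∈ ℝ, ρ > 0, and let ℓ : ℕ → ℝ be a sequence of losses with ℓ_t ∈ [0,1] for all t. Define γ by γ_{t+1} = γ_t + ρ(ε − ℓ_t). If there is a lower bound γ_min such that γ_t ≥ γ_min for all t, then for every t ≥ 1, (1/t) Σ_{s=1}^{t} ℓ_s ≤ ε + (γ_1 − γ_min)/(ρ t). -/
/-- Conformal controller risk bound: a uniform lower bound `γ_min` on the control
variable under the update `γ (t+1) = γ t + ρ (ε − ℓ t)` with losses in `[0,1]`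
implies the averaged loss is at most `ε + (γ 1 − γ_min)/(ρ t)`. -/
theorem stmt_2 (ε ρ : ℝ) (hρ : 0 < ρ) (ℓ γ : ℕ → ℝ)
    (hℓ : ∀ t, ℓ t ∈ Set.Icc (0 : ℝ) 1)
    (hupd : ∀ t, γ (t + 1) = γ t + ρ * (ε - ℓ t))
    (γmin : ℝ) (hlb : ∀ t, γmin ≤ γ t) :
    ∀ t : ℕ, 1 ≤ t →
      (1 / (t : ℝ)) * ∑ s ∈ Finset.Icc 1 t, ℓ s
        ≤ ε + (γ 1 - γmin) / (ρ * t) := by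
  have key : ∀ t : ℕ, γ (t + 1) = γ 1 + ρ * ((t : ℝ) * ε - ∑ s ∈ Finset.Icc 1 t, ℓ s) := by
    intro t
    induction t with
    | zero => simp
    | succ n ih =>
      rw [hupd (n + 1), ih, Finset.sum_Icc_succ_top (by omega : 1 ≤ n + 1)]
      push_cast
      ring
  intro t ht
  have htpos : (0 : ℝ) < t := by exact_mod_cast ht
  have h1 := hlb (t + 1)
  rw [key t] at h1
  -- from h1: γmin ≤ γ 1 + ρ*(t*ε - S), so S ≤ t*ε + (γ1 - γmin)/ρ
  have hS : ∑ s ∈ Finset.Icc 1 t, ℓ s ≤ (t : ℝ) * ε + (γ 1 - γmin) / ρ := by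
    have hc : (γ 1 - γmin) / ρ * ρ = γ 1 - γmin := div_mul_cancel₀ _ (ne_of_gt hρ)
    nlinarith [h1, hρ]
  have : (1 / (t : ℝ)) * ∑ s ∈ Finset.Icc 1 t, ℓ s ≤
      (1 / (t : ℝ)) * ((t : ℝ) * ε + (γ 1 - γmin) / ρ) := by
    apply mul_le_mul_of_nonneg_left hS (by positivity)
  calc (1 / (t : ℝ)) * ∑ s ∈ Finset.Icc 1 t, ℓ s
      ≤ (1 / (t : ℝ)) * ((t : ℝ) * ε + (γ 1 - γmin) / ρ) := this
    _ = ε + (γ 1 - γmin) / (ρ * t) := by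
        field_simp
end

section
/- Let ε, ε_safe ∈ ℝ with ε_safe ≤ ε, let ρ > 0, K a positive integer, and ℓ : ℕ → [0,1] a loss sequence. Define γ by γ_{t+1} = γ_t + ρ(ε − ℓ_t). Suppose that for any window of K consecutive indices k ∈ [t, t+K−1], the average loss (1/K) Σ_{k=t}^{t+K−1} ℓ_k ≤ ε_safe whenever γ_k ≤ γ_safe for all k in the window (the eventual-safety condition). If γ_1 ≥ γ_safe − ρ, then γ_t ≥ γ_safe − Kρ for all t ≥ 1. -/
/-!
Telescoping the update over a window of `K` steps gives
`γ (s + K) = γ s + ρ (K ε - ∑ ℓ)`, and since `ℓ ≤ 1` the controller drops by at most `ρ` per step.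
So if `γ (s + K) < γ_safe - K ρ`, every `γ k` in the preceding window is below `γ_safe`; eventual
safety then bounds the window's total loss by `K ε`, whence `γ s ≤ γ (s + K)`, and induction in
steps of `K`, started by the drop bound on the first `K` times, concludes. That `ε ≥ 0`
is forced: otherwise `γ` would drift to `-∞`, and the losses of a window in that tail would sum to
less than zero.
-/

open Finset Filter

def IsControlUpdate (ε ρ : ℝ) (ℓ γ : ℕ → ℝ) : Prop :=
  ∀ t, γ (t + 1) = γ t + ρ * (ε - ℓ t)

namespace IsControlUpdate

variable {ε ρ : ℝ} {ℓ γ : ℕ → ℝ}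

theorem add_eq (h : IsControlUpdate ε ρ ℓ γ) (t n : ℕ) :
    γ (t + n) = γ t + ρ * (n * ε - ∑ k ∈ Ico t (t + n), ℓ k) := by
  induction n with
  | zero => simp
  | succ n ih =>
    rw [← add_assoc, h, ih, sum_Ico_succ_top (Nat.le_add_right t n)]
    push_cast
    ring

theorem le_add_mul (h : IsControlUpdate ε ρ ℓ γ) (hρ : 0 ≤ ρ) (hℓ : ∀ k, 0 ≤ ℓ k) (t n : ℕ) :
    γ (t + n) ≤ γ t + n * (ρ * ε) := by
  have hsum : 0 ≤ ∑ k ∈ Ico t (t + n), ℓ k := sum_nonneg fun k _ ↦ hℓ k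
  rw [h.add_eq]
  nlinarith

theorem sub_mul_le (h : IsControlUpdate ε ρ ℓ γ) (hρ : 0 ≤ ρ) (hε : 0 ≤ ε) (hℓ : ∀ k, ℓ k ≤ 1)
    (t n : ℕ) : γ t - n * ρ ≤ γ (t + n) := by
  have hsum : ∑ k ∈ Ico t (t + n), ℓ k ≤ n := by
    simpa using sum_le_card_nsmul (Ico t (t + n)) ℓ 1 fun k _ ↦ hℓ k
  rw [h.add_eq]
  nlinarith [mul_le_mul_of_nonneg_left hsum hρ, mul_nonneg (mul_nonneg hρ n.cast_nonneg) hε]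

theorem le_of_sum_Ico_le (h : IsControlUpdate ε ρ ℓ γ) (hρ : 0 ≤ ρ) {t n : ℕ}
    (hsum : ∑ k ∈ Ico t (t + n), ℓ k ≤ n * ε) : γ t ≤ γ (t + n) := by
  rw [h.add_eq]
  nlinarith

theorem tendsto_atBot (h : IsControlUpdate ε ρ ℓ γ) (hρ : 0 < ρ) (hε : ε < 0)
    (hℓ : ∀ k, 0 ≤ ℓ k) : Tendsto γ atTop atBot := by
  have hdrift : Tendsto (fun n : ℕ ↦ γ 0 + n * (ρ * ε)) atTop atBot :=
    tendsto_atBot_add_const_left _ _ <|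
      tendsto_natCast_atTop_atTop.atTop_mul_const_of_neg (mul_neg_of_pos_of_neg hρ hε)
  refine tendsto_atBot_mono (fun n ↦ ?_) hdrift
  simpa using h.le_add_mul hρ.le hℓ 0 n

variable {K : ℕ} {c : ℝ}

theorem nonneg_of_window_sum_le (h : IsControlUpdate ε ρ ℓ γ) (hρ : 0 < ρ) (hK : 0 < K)
    (hℓ : ∀ k, 0 ≤ ℓ k)
    (hwin : ∀ t, 1 ≤ t → (∀ k ∈ Ico t (t + K), γ k ≤ c) → ∑ k ∈ Ico t (t + K), ℓ k ≤ K * ε) :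
    0 ≤ ε := by
  by_contra! hε
  obtain ⟨N, hN⟩ := eventually_atTop.mp (Filter.tendsto_atBot.mp (h.tendsto_atBot hρ hε hℓ) c)
  have hsum := hwin (N + 1) (by omega) fun k hk ↦ hN k (by simp at hk; omega)
  have hKε : (K : ℝ) * ε < 0 := mul_neg_of_pos_of_neg (by exact_mod_cast hK) hε
  linarith [sum_nonneg fun k (_ : k ∈ Ico (N + 1) (N + 1 + K)) ↦ hℓ k]

theorem lower_bound (h : IsControlUpdate ε ρ ℓ γ) (hρ : 0 ≤ ρ) (hε : 0 ≤ ε) (hK : 0 < K)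
    (hℓ : ∀ k, ℓ k ≤ 1)
    (hwin : ∀ t, 1 ≤ t → (∀ k ∈ Ico t (t + K), γ k ≤ c) → ∑ k ∈ Ico t (t + K), ℓ k ≤ K * ε)
    (hinit : c - ρ ≤ γ 1) : ∀ t, 1 ≤ t → c - K * ρ ≤ γ t := by
  intro t
  induction t using Nat.strong_induction_on with
  | _ t ih =>
    intro ht
    by_cases htK : t ≤ K
    · have hdrop := h.sub_mul_le hρ hε hℓ 1 (t - 1)
      rw [Nat.add_sub_cancel' ht, Nat.cast_sub ht, Nat.cast_one] at hdrop
      have : (t : ℝ) ≤ K := by exact_mod_cast htK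
      nlinarith [mul_le_mul_of_nonneg_right this hρ]
    · obtain ⟨s, rfl⟩ : ∃ s, t = s + K := ⟨t - K, by omega⟩
      by_contra! hlow
      have hsafe : ∀ k ∈ Ico s (s + K), γ k ≤ c := by
        intro k hk
        obtain ⟨i, rfl⟩ : ∃ i, k = s + i := ⟨k - s, by simp at hk; omega⟩
        have hdrop := h.sub_mul_le hρ hε hℓ (s + i) (K - i)
        rw [add_assoc, Nat.add_sub_cancel' (by simp at hk; omega)] at hdrop
        have : ((K - i : ℕ) : ℝ) ≤ K := by exact_mod_cast Nat.sub_le K i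
        nlinarith
      have hrise := h.le_of_sum_Ico_le hρ (hwin s (by omega) hsafe)
      linarith [ih s (by omega) (by omega)]

end IsControlUpdate

/-- Key lemma for the conformal controller theorem: under the eventual-safety
condition with tolerance `ε_safe ≤ ε` and `γ 1 ≥ γ_safe − ρ`, the control
variable stays bounded below by `γ_safe − K ρ`. -/
theorem stmt_4 (ε εsafe γsafe ρ : ℝ) (hεs : εsafe ≤ ε) (hρ : 0 < ρ)
    (K : ℕ) (hK : 0 < K) (ℓ γ : ℕ → ℝ)
    (hℓ : ∀ t, ℓ t ∈ Set.Icc (0 : ℝ) 1)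
    (hupd : ∀ t, γ (t + 1) = γ t + ρ * (ε - ℓ t))
    (hsafe : ∀ t : ℕ, 1 ≤ t →
      (∀ k ∈ Finset.Icc t (t + K - 1), γ k ≤ γsafe) →
      (1 / (K : ℝ)) * ∑ k ∈ Finset.Icc t (t + K - 1), ℓ k ≤ εsafe)
    (hinit : γsafe - ρ ≤ γ 1) :
    ∀ t : ℕ, 1 ≤ t → γsafe - (K : ℝ) * ρ ≤ γ t := by
  have hKpos : (0 : ℝ) < K := by exact_mod_cast hK
  have hwin : ∀ t, 1 ≤ t → (∀ k ∈ Ico t (t + K), γ k ≤ γsafe) →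
      ∑ k ∈ Ico t (t + K), ℓ k ≤ K * ε := by
    intro t ht hγ
    have hIco : Ico t (t + K) = Icc t (t + K - 1) := by
      rw [← Ico_add_one_right_eq_Icc, Nat.sub_add_cancel (by omega)]
    rw [hIco] at hγ ⊢
    have havg := hsafe t ht hγ
    rw [one_div, inv_mul_le_iff₀ hKpos] at havg
    linarith [mul_le_mul_of_nonneg_left hεs hKpos.le]
  have hε := IsControlUpdate.nonneg_of_window_sum_le hupd hρ hK (fun k ↦ (hℓ k).1) hwin
  exact IsControlUpdate.lower_bound hupd hρ.le hε hK (fun k ↦ (hℓ k).2) hwin hinit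
end

section
/- Let ε, ε_safe ∈ ℝ with ε_safe ≤ ε, ρ > 0, K a positive integer, and ℓ : ℕ → [0,1]. Define γ by γ_{t+1} = γ_t + ρ(ε − ℓ_t) and assume the eventual-safety condition: for any K consecutive indices all satisfying γ_k ≤ γ_safe, the window-averaged loss is at most ε_safe. If γ_1 ≥ γ_safe − ρ, then for all t ≥ K, (1/t) Σ_{s=1}^{t} ℓ_s ≤ ε + ((γ_1 − γ_safe)/ρ + K)/t. -/
/-- Conformal controller risk bound (Theorem 1): under eventual safety with
`ε_safe ≤ ε` and `γ 1 ≥ γ_safe − ρ`, for all `t ≥ K` the averaged loss is at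
most `ε + ((γ 1 − γ_safe)/ρ + K)/t`. -/
theorem stmt_5 (ε εsafe γsafe ρ : ℝ) (hεs : εsafe ≤ ε) (hρ : 0 < ρ)
    (K : ℕ) (hK : 0 < K) (ℓ γ : ℕ → ℝ)
    (hℓ : ∀ t, ℓ t ∈ Set.Icc (0 : ℝ) 1)
    (hupd : ∀ t, γ (t + 1) = γ t + ρ * (ε - ℓ t))
    (hsafe : ∀ t : ℕ, 1 ≤ t →
      (∀ k ∈ Finset.Icc t (t + K - 1), γ k ≤ γsafe) →
      (1 / (K : ℝ)) * ∑ k ∈ Finset.Icc t (t + K - 1), ℓ k ≤ εsafe)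
    (hinit : γsafe - ρ ≤ γ 1) :
    ∀ t : ℕ, K ≤ t →
      (1 / (t : ℝ)) * ∑ s ∈ Finset.Icc 1 t, ℓ s
        ≤ ε + ((γ 1 - γsafe) / ρ + (K : ℝ)) / t := by
  -- telescoping identity
  have tel : ∀ a n : ℕ, γ (a + n) = γ a + ρ * (n * ε - ∑ k ∈ Finset.Ico a (a + n), ℓ k) := by
    intro a n
    induction n with
    | zero => simp
    | succ n ih =>
      have h1 : a + (n + 1) = (a + n) + 1 := by omega
      rw [h1, hupd, ih, Finset.sum_Ico_succ_top (Nat.le_add_right a n)]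
      push_cast; ring
  -- restated safety
  have hsafe' : ∀ t : ℕ, 1 ≤ t → (∀ k ∈ Finset.Ico t (t + K), γ k ≤ γsafe) →
      ∑ k ∈ Finset.Ico t (t + K), ℓ k ≤ (K : ℝ) * εsafe := by
    intro t ht hw
    have heq : Finset.Icc t (t + K - 1) = Finset.Ico t (t + K) := by
      rw [← Finset.Ico_add_one_right_eq_Icc]; congr 1; omega
    have h := hsafe t ht (by rw [heq]; exact hw)
    rw [heq] at h
    have hK0 : (0:ℝ) < K := by exact_mod_cast hK
    rw [one_div, inv_mul_le_iff₀ hK0] at h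
    linarith
  intro t htK
  by_cases hε : 0 ≤ ε
  · -- main case
    have key : ∀ t : ℕ, 1 ≤ t → ∃ j, 1 ≤ j ∧ j ≤ t ∧ t < j + K ∧ γsafe - ρ ≤ γ j ∧
        ∀ k, j < k → k ≤ t → γ k ≤ γsafe := by
      intro t ht
      induction t with
      | zero => omega
      | succ t ih =>
        by_cases h1 : γsafe - ρ ≤ γ (t + 1)
        · exact ⟨t + 1, by omega, le_refl _, by omega, h1, fun k hk1 hk2 => absurd hk2 (by omega)⟩
        · push_neg at h1
          have ht1 : 1 ≤ t := by
            by_contra h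
            have h0 : t = 0 := by omega
            rw [h0] at h1; exact absurd hinit (not_le.mpr h1)
          obtain ⟨j, hj1, hj2, hj3, hj4, hj5⟩ := ih ht1
          have hγt1 : γ (t + 1) ≤ γsafe := by linarith
          by_cases h2 : t + 1 < j + K
          · refine ⟨j, hj1, by omega, h2, hj4, fun k hk1 hk2 => ?_⟩
            by_cases hkt : k ≤ t
            · exact hj5 k hk1 hkt
            · have : k = t + 1 := by omega
              rw [this]; exact hγt1
          · have hjK : j + K = t + 1 := by omega
            by_cases h3 : γ j ≤ γsafe
            · exfalso
              have hw : ∀ k ∈ Finset.Ico j (j + K), γ k ≤ γsafe := by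
                intro k hk
                rw [Finset.mem_Ico] at hk
                rcases eq_or_lt_of_le hk.1 with h | h
                · rw [← h]; exact h3
                · exact hj5 k h (by omega)
              have hsum := hsafe' j hj1 hw
              have htj := tel j K
              have hnn : (0:ℝ) ≤ K * ε - ∑ k ∈ Finset.Ico j (j + K), ℓ k := by
                have : (K:ℝ) * εsafe ≤ (K:ℝ) * ε := by
                  have hK0 : (0:ℝ) ≤ K := by positivity
                  nlinarith
                linarith
              have : γ j ≤ γ (j + K) := by nlinarith
              rw [hjK] at this
              linarith
            · push_neg at h3
              have hstep := hupd j
              have hl := hℓ j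
              have hg : γsafe - ρ ≤ γ (j + 1) := by
                have : ρ * (ε - ℓ j) ≥ -ρ := by nlinarith [hl.1, hl.2]
                linarith
              refine ⟨j + 1, by omega, by omega, by omega, hg, fun k hk1 hk2 => ?_⟩
              by_cases hkt : k ≤ t
              · exact hj5 k (by omega) hkt
              · have : k = t + 1 := by omega
                rw [this]; exact hγt1
    have mono : ∀ a n : ℕ, γ a - n * ρ ≤ γ (a + n) := by
      intro a n
      induction n with
      | zero => simp
      | succ n ih =>
        have h := hupd (a + n)
        have hl := hℓ (a + n)
        have h1 : a + (n + 1) = (a + n) + 1 := by omega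
        rw [h1, h]
        have : ρ * (ε - ℓ (a + n)) ≥ -ρ := by nlinarith [hl.1, hl.2]
        push_cast
        linarith
    have lower : ∀ s : ℕ, 1 ≤ s → γsafe - K * ρ ≤ γ s := by
      intro s hs
      obtain ⟨j, hj1, hj2, hj3, hj4, _⟩ := key s hs
      have hm := mono j (s - j)
      rw [Nat.add_sub_cancel' hj2] at hm
      have hn : ((s - j : ℕ) : ℝ) ≤ (K : ℝ) - 1 := by
        have h1 : s - j ≤ K - 1 := by omega
        have h2 : ((s - j : ℕ) : ℝ) ≤ ((K - 1 : ℕ) : ℝ) := by exact_mod_cast h1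
        rwa [Nat.cast_sub hK, Nat.cast_one] at h2
      nlinarith [(Nat.cast_nonneg (s - j) : (0:ℝ) ≤ ((s - j : ℕ) : ℝ))]
    have hb := lower (1 + t) (by omega)
    have htel := tel 1 t
    have hS : Finset.Ico 1 (1 + t) = Finset.Icc 1 t := by
      rw [add_comm, Finset.Ico_add_one_right_eq_Icc]
    rw [hS] at htel
    set S := ∑ s ∈ Finset.Icc 1 t, ℓ s with hSdef
    have ht0 : (0:ℝ) < t := by
      have : 0 < t := by omega
      exact_mod_cast this
    have hρS : ρ * S ≤ ρ * t * ε + (γ 1 - γsafe) + ρ * K := by nlinarith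
    have hfin : S ≤ t * ε + ((γ 1 - γsafe) / ρ + K) := by
      have hD : γ 1 - γsafe = ρ * ((γ 1 - γsafe) / ρ) := (mul_div_cancel₀ _ hρ.ne').symm
      nlinarith [hρS, hD]
    rw [one_div, inv_mul_le_iff₀ ht0]
    have : (t:ℝ) * (ε + ((γ 1 - γsafe) / ρ + ↑K) / ↑t) = t * ε + ((γ 1 - γsafe) / ρ + K) := by
      field_simp
    rw [this]
    exact hfin
  · -- ε < 0 : hypotheses contradictory
    exfalso
    push_neg at hε
    have hpos : (0:ℝ) < ρ * (-ε) := by nlinarith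
    obtain ⟨N, hN⟩ := exists_nat_ge ((γ 1 - γsafe) / (ρ * (-ε)))
    have hNb : γ 1 - γsafe ≤ N * (ρ * (-ε)) := by
      rw [div_le_iff₀ hpos] at hN; linarith
    have hw : ∀ k ∈ Finset.Ico (N + 1) (N + 1 + K), γ k ≤ γsafe := by
      intro k hk
      rw [Finset.mem_Ico] at hk
      have hk1 : N + 1 ≤ k := hk.1
      have hktel := tel 1 (k - 1)
      have hkk : 1 + (k - 1) = k := by omega
      rw [hkk] at hktel
      have hsum0 : (0:ℝ) ≤ ∑ i ∈ Finset.Ico 1 k, ℓ i :=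
        Finset.sum_nonneg fun i _ => (hℓ i).1
      have hcast : (N : ℝ) ≤ ((k - 1 : ℕ) : ℝ) := by exact_mod_cast (by omega : N ≤ k - 1)
      have h1 : ((k - 1 : ℕ) : ℝ) * ε ≤ (N : ℝ) * ε := by nlinarith
      have h2 : ρ * (((k - 1 : ℕ) : ℝ) * ε) ≤ ρ * ((N : ℝ) * ε) :=
        mul_le_mul_of_nonneg_left h1 hρ.le
      nlinarith [mul_nonneg hρ.le hsum0]
    have hcon := hsafe' (N + 1) (by omega) hw
    have hsum0 : (0:ℝ) ≤ ∑ k ∈ Finset.Ico (N + 1) (N + 1 + K), ℓ k :=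
      Finset.sum_nonneg fun i _ => (hℓ i).1
    have hKε : (K:ℝ) * εsafe < 0 := by
      have hK0 : (0:ℝ) < K := by exact_mod_cast hK
      nlinarith
    linarith
end

section
/- Consider the single-segment policy with perfect efficiency: given true marginal value q, price λ, cost C ≥ 0, initial SoC e₀ ∈ [0,E], power limit P > 0, the optimal dispatch is (p',b') = (0, min(P, E − e₀)) if λ ≤ q; (min(P, e₀), 0) if λ > max(0, q + C); and (0,0) otherwise. If λ ≤ q (optimal action is to buy) and the conformal policy holds (p*,b*) = (0,0), then the profit loss V − V̄ = (q − λ)·min(P, E − e₀) ≥ 0. Symmetrically, if λ > max(0, q + C) and the conformal policy holds, then V − V̄ = (λ − C − q)·min(P, e₀) ≥ 0. -/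
/-- Type II (missed action) losses: if the conformal policy holds while the
optimal single-segment policy would buy (`λ ≤ q`) or sell (`λ > max 0 (q + C)`),
the resulting profit losses are `(q − λ) min(P, E − e₀)` and
`(λ − C − q) min(P, e₀)` respectively, both nonnegative. -/
theorem stmt_17 (lam q C E P e₀ Q₀ : ℝ) (hC : 0 ≤ C) (hP : 0 < P)
    (he₀ : e₀ ∈ Set.Icc (0 : ℝ) E)
    (V : ℝ → ℝ → ℝ)
    (hV : ∀ p b : ℝ, V p b = lam * (p - b) - C * p + Q₀ + q * (b - p)) :
    (lam ≤ q →
      V 0 (min P (E - e₀)) - V 0 0 = (q - lam) * min P (E - e₀) ∧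
      0 ≤ (q - lam) * min P (E - e₀)) ∧
    (max 0 (q + C) < lam →
      V (min P e₀) 0 - V 0 0 = (lam - C - q) * min P e₀ ∧
      0 ≤ (lam - C - q) * min P e₀) := by
  obtain ⟨h0, hE⟩ := he₀
  constructor
  · intro h
    constructor
    · simp [hV]; ring
    · exact mul_nonneg (by linarith) (le_min hP.le (by linarith))
  · intro h
    rw [max_lt_iff] at h
    constructor
    · simp [hV]; ring
    · exact mul_nonneg (by linarith [h.2]) (le_min hP.le h0)
end
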